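/- arXiv:2406.17738 — 7 statements merged into one kernel-verified Lean document; each statement's English description precedes it below -/
import Mathlib

section
/- Define s : ℕ × ℤ → ℕ by the initial conditions s(3,σ) = 1 if σ = 2 and 0 otherwise, s(4,σ) = 1 if σ = 0 and 0 otherwise, and for c ≥ 5 by the recurrence s(c,σ) = s(c-1, σ + (-1)^c·2) + s(c-2, σ + (-1)^c·2) + s(c-2, σ). Then for all c ≥ 4: if c is odd then s(c,σ) = s(c-1,σ-2) + s(c-1,σ-4) + (1 if σ = 2 else 0), and if c is even then s(c,σ) = s(c-1,σ+2) + s(c-1,σ+4) - (1 if σ = -2 else 0). -/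
def sCount : ℕ → ℤ → ℕ
  | 0, _ => 0
  | 1, _ => 0
  | 2, _ => 0
  | 3, σ => if σ = 2 then 1 else 0
  | 4, σ => if σ = 0 then 1 else 0
  | (c + 5), σ =>
      sCount (c + 4) (σ + (-1) ^ (c + 5) * 2) +
        sCount (c + 3) (σ + (-1) ^ (c + 5) * 2) + sCount (c + 3) σ

theorem sCount_second_recurrence (c : ℕ) (hc : 4 ≤ c) (σ : ℤ) :
    (Odd c →
      (sCount c σ : ℤ) =
        sCount (c - 1) (σ - 2) + sCount (c - 1) (σ - 4) + (if σ = 2 then 1 else 0)) ∧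
    (Even c →
      (sCount c σ : ℤ) =
        sCount (c - 1) (σ + 2) + sCount (c - 1) (σ + 4) - (if σ = -2 then 1 else 0)) := by
  induction c, hc using Nat.le_induction generalizing σ with
  | base =>
    constructor
    · intro h; exact absurd h (by decide)
    · intro _
      simp only [sCount, show (4:ℕ) - 1 = 3 from rfl]
      by_cases h0 : σ = 0 <;> by_cases h2 : σ = -2 <;> simp [h0, h2] <;> omega
  | succ n hn ih =>
    obtain ⟨k, rfl⟩ : ∃ k, n = k + 4 := ⟨n - 4, by omega⟩
    rcases Nat.even_or_odd k with hk | hk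
    · -- k even, so k+5 odd
      have h5 : Odd (k + 5) := by
        rcases hk with ⟨m, rfl⟩; exact ⟨m + 2, by ring⟩
      have h4 : Even (k + 4) := by
        rcases hk with ⟨m, rfl⟩; exact ⟨m + 2, by ring⟩
      constructor
      · intro _
        have hrec := (ih (σ - 4)).2 h4
        simp only [show k + 4 - 1 = k + 3 from rfl] at hrec
        have hpow : ((-1 : ℤ)) ^ (k + 5) = -1 := h5.neg_one_pow
        show ((sCount (k + 4) (σ + (-1) ^ (k + 5) * 2) +
            sCount (k + 3) (σ + (-1) ^ (k + 5) * 2) + sCount (k + 3) σ : ℕ) : ℤ) =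
          sCount (k + 4) (σ - 2) + sCount (k + 4) (σ - 4) + (if σ = 2 then 1 else 0)
        rw [hpow]
        have e1 : σ + (-1) * 2 = σ - 2 := by ring
        have e2 : σ - 4 + 2 = σ - 2 := by ring
        have e3 : σ - 4 + 4 = σ := by ring
        rw [e1]
        rw [e2, e3] at hrec
        push_cast
        have hif : (if σ - 4 = -2 then (1:ℤ) else 0) = (if σ = 2 then 1 else 0) := by
          by_cases h : σ = 2 <;> simp [h] <;> omega
        rw [hif] at hrec
        linarith
      · intro h
        rw [Nat.even_iff] at h; rw [Nat.odd_iff] at h5; omega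
    · -- k odd, so k+5 even
      have h5 : Even (k + 5) := by
        rcases hk with ⟨m, rfl⟩; exact ⟨m + 3, by ring⟩
      have h4 : Odd (k + 4) := by
        rcases hk with ⟨m, rfl⟩; exact ⟨m + 2, by ring⟩
      constructor
      · intro h
        rw [Nat.odd_iff] at h; rw [Nat.even_iff] at h5; omega
      · intro _
        have hrec := (ih (σ + 4)).1 h4
        simp only [show k + 4 - 1 = k + 3 from rfl] at hrec
        have hpow : ((-1 : ℤ)) ^ (k + 5) = 1 := h5.neg_one_pow
        show ((sCount (k + 4) (σ + (-1) ^ (k + 5) * 2) +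
            sCount (k + 3) (σ + (-1) ^ (k + 5) * 2) + sCount (k + 3) σ : ℕ) : ℤ) =
          sCount (k + 4) (σ + 2) + sCount (k + 4) (σ + 4) - (if σ = -2 then 1 else 0)
        rw [hpow]
        have e1 : σ + 1 * 2 = σ + 2 := by ring
        have e2 : σ + 4 - 2 = σ + 2 := by ring
        have e3 : σ + 4 - 4 = σ := by ring
        rw [e1]
        rw [e2, e3] at hrec
        push_cast
        have hif : (if σ + 4 = 2 then (1:ℤ) else 0) = (if σ = -2 then 1 else 0) := by
          by_cases h : σ = -2 <;> simp [h] <;> omega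
        rw [hif] at hrec
        linarith
end

section
/- With s(c,σ) defined by the recurrence s(c,σ) = s(c-1, σ+(-1)^c·2) + s(c-2, σ+(-1)^c·2) + s(c-2, σ) for c ≥ 5 and base cases s(3,2)=1, s(4,0)=1 (zero otherwise), the following symmetries hold for all c ≥ 3: if c is even then s(c,σ) = s(c,-σ) for all σ; if c is odd then s(c,2) = s(c,4) + 1, and s(c,σ) = s(c,6-σ) whenever σ ≥ 6 or σ ≤ 0. -/
def pairSum (c : ℕ) (σ : ℤ) : ℕ := sCount (c + 1) σ + sCount c σ

lemma sCount_add_five (n : ℕ) (σ : ℤ) :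
    sCount (n + 5) σ = pairSum (n + 3) (σ - (-1) ^ n * 2) + sCount (n + 3) σ := by
  rw [sCount, pairSum, pow_add]
  ring_nf

lemma pairSum_add_four (n : ℕ) (σ : ℤ) :
    pairSum (n + 4) σ = pairSum (n + 3) σ + pairSum (n + 3) (σ - (-1) ^ n * 2) := by
  rw [pairSum, sCount_add_five, pairSum.eq_def (n + 3) σ]
  ring

lemma map_sub_add_map_add_of_symm {G M : Type*} [AddCommGroup G] [AddCommMonoid M] {f : G → M}
    {a : G} (hf : ∀ x, f (a - x) = f x) (e x : G) :
    f (a - e - x) + f (a - e - x + e) = f x + f (x + e) := by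
  rw [← hf (a - e - x), add_comm, show a - e - x + e = a - x by abel,
    show a - (a - e - x) = x + e by abel, hf]

lemma pairSum_symm (n : ℕ) (σ : ℤ) : pairSum (n + 3) (3 - (-1) ^ n - σ) = pairSum (n + 3) σ := by
  induction n generalizing σ with
  | zero => simp only [pairSum, sCount]; split_ifs <;> omega
  | succ n ih =>
    rw [pairSum_add_four, pairSum_add_four, pow_succ]
    convert map_sub_add_map_add_of_symm ih (-((-1) ^ n * 2)) σ using 3 <;> ring

lemma pairSum_two_sub (k : ℕ) (σ : ℤ) : pairSum (2 * k + 3) (2 - σ) = pairSum (2 * k + 3) σ := by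
  simpa [pow_mul] using pairSum_symm (2 * k) σ

lemma pairSum_four_sub (k : ℕ) (σ : ℤ) : pairSum (2 * k + 4) (4 - σ) = pairSum (2 * k + 4) σ := by
  simpa [pow_succ, pow_mul] using pairSum_symm (2 * k + 1) σ

lemma sCount_even_succ_succ (k : ℕ) (σ : ℤ) :
    sCount (2 * k + 6) σ = pairSum (2 * k + 4) (σ + 2) + sCount (2 * k + 4) σ := by
  simpa [pow_succ, pow_mul] using sCount_add_five (2 * k + 1) σ

lemma sCount_odd_succ_succ (k : ℕ) (σ : ℤ) :
    sCount (2 * k + 5) σ = pairSum (2 * k + 3) (σ - 2) + sCount (2 * k + 3) σ := by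
  simpa [pow_mul] using sCount_add_five (2 * k) σ

lemma sCount_even_neg (k : ℕ) (σ : ℤ) : sCount (2 * k + 4) (-σ) = sCount (2 * k + 4) σ := by
  induction k with
  | zero => simp only [sCount]; split_ifs <;> omega
  | succ k ih =>
    rw [show 2 * (k + 1) + 4 = 2 * k + 6 by ring, sCount_even_succ_succ, sCount_even_succ_succ, ih,
      ← pairSum_four_sub k (-σ + 2)]
    ring_nf

lemma sCount_odd_two (k : ℕ) : sCount (2 * k + 3) 2 = sCount (2 * k + 3) 4 + 1 := by
  induction k with
  | zero => rfl
  | succ k ih =>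
    rw [show 2 * (k + 1) + 3 = 2 * k + 5 by ring, sCount_odd_succ_succ, sCount_odd_succ_succ, ih,
      ← pairSum_two_sub k (4 - 2)]
    ring_nf

lemma sCount_odd_six_sub (k : ℕ) {σ : ℤ} (hσ : 6 ≤ σ ∨ σ ≤ 0) :
    sCount (2 * k + 3) (6 - σ) = sCount (2 * k + 3) σ := by
  induction k with
  | zero => simp only [sCount]; split_ifs <;> omega
  | succ k ih =>
    rw [show 2 * (k + 1) + 3 = 2 * k + 5 by ring, sCount_odd_succ_succ, sCount_odd_succ_succ, ih,
      ← pairSum_two_sub k (6 - σ - 2)]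
    ring_nf

theorem sCount_symmetries (c : ℕ) (hc : 3 ≤ c) :
    (Even c → ∀ σ : ℤ, sCount c σ = sCount c (-σ)) ∧
    (Odd c → sCount c 2 = sCount c 4 + 1) ∧
    (Odd c → ∀ σ : ℤ, (6 ≤ σ ∨ σ ≤ 0) → sCount c σ = sCount c (6 - σ)) := by
  refine ⟨fun ⟨m, hm⟩ σ => ?_, fun ⟨k, hk⟩ => ?_, fun ⟨k, hk⟩ σ hσ => ?_⟩
  · obtain ⟨k, rfl⟩ : ∃ k, c = 2 * k + 4 := ⟨m - 2, by omega⟩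
    exact (sCount_even_neg k σ).symm
  · obtain ⟨k, rfl⟩ : ∃ j, c = 2 * j + 3 := ⟨k - 1, by omega⟩
    exact sCount_odd_two k
  · obtain ⟨k, rfl⟩ : ∃ j, c = 2 * j + 3 := ⟨k - 1, by omega⟩
    exact (sCount_odd_six_sub k hσ).symm
end

section
/- With s(c,σ) defined by its recurrence and base cases, for every m ≥ 1 and every integer k with 0 ≤ k ≤ 2m-1, setting σ = 2k - 2m + 2, one has s(2m+1, σ) + s(2m+2, σ) = C(2m-1, k), the binomial coefficient. -/
def B (n : ℕ) (k : ℤ) : ℕ := if 0 ≤ k then n.choose k.toNat else 0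

lemma B_pascal (n : ℕ) (k : ℤ) : B (n+1) k = B n (k-1) + B n k := by
  unfold B
  rcases lt_trichotomy k 0 with h|h|h
  · rw [if_neg (by omega), if_neg (by omega), if_neg (by omega)]
  · subst h; norm_num
  · rw [if_pos h.le, if_pos (by omega : (0:ℤ) ≤ k - 1), if_pos h.le]
    have ht : k.toNat = (k-1).toNat + 1 := by omega
    rw [ht, Nat.choose_succ_succ]

lemma sCount_add5 (c : ℕ) (σ : ℤ) : sCount (c+5) σ =
    sCount (c + 4) (σ + (-1) ^ (c + 5) * 2) +
      sCount (c + 3) (σ + (-1) ^ (c + 5) * 2) + sCount (c + 3) σ := by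
  rfl

lemma odd_rec (n : ℕ) (σ : ℤ) : sCount (2*n+5) σ =
    sCount (2*n+4) (σ-2) + sCount (2*n+3) (σ-2) + sCount (2*n+3) σ := by
  have h : ((-1:ℤ)) ^ (2*n + 5) = -1 := Odd.neg_one_pow ⟨n+2, by ring⟩
  rw [show 2*n+5 = (2*n)+5 from rfl, sCount_add5, h,
    show (σ + -1*2 : ℤ) = σ - 2 by ring]

lemma even_rec (n : ℕ) (σ : ℤ) : sCount (2*n+6) σ =
    sCount (2*n+5) (σ+2) + sCount (2*n+4) (σ+2) + sCount (2*n+4) σ := by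
  have h : ((-1:ℤ)) ^ (2*n+1 + 5) = 1 := Even.neg_one_pow ⟨n+3, by ring⟩
  rw [show 2*n+6 = (2*n+1)+5 from rfl, sCount_add5, h,
    show (σ + 1*2 : ℤ) = σ + 2 by ring]

lemma g_rec (n : ℕ) (σ : ℤ) :
    sCount (2*n+5) σ + sCount (2*n+6) σ =
    (sCount (2*n+3) (σ-2) + sCount (2*n+4) (σ-2)) +
      2*(sCount (2*n+3) σ + sCount (2*n+4) σ) +
      (sCount (2*n+3) (σ+2) + sCount (2*n+4) (σ+2)) := by
  rw [even_rec, odd_rec n σ, odd_rec n (σ+2)]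
  have h1 : σ + 2 - 2 = σ := by ring
  rw [h1]
  ring

lemma main_lemma (n : ℕ) : ∀ k : ℤ,
    sCount (2*n+3) (2*k - 2*n) + sCount (2*n+4) (2*k - 2*n) = B (2*n+1) k := by
  induction n with
  | zero =>
    intro k
    show sCount 3 (2*k - 0) + sCount 4 (2*k - 0) = B 1 k
    have h3 : sCount 3 (2*k - 0) = if 2*k - 0 = 2 then 1 else 0 := rfl
    have h4 : sCount 4 (2*k - 0) = if 2*k - 0 = 0 then 1 else 0 := rfl
    rw [h3, h4]
    unfold B
    rcases lt_trichotomy k 0 with h|h|h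
    · rw [if_neg (by omega), if_neg (by omega), if_neg (by omega)]
    · subst h; norm_num
    · rcases eq_or_lt_of_le (by omega : (1:ℤ) ≤ k) with h1|h1
      · rw [if_pos (by omega), if_neg (by omega), if_pos h.le,
          show k.toNat = 1 by omega]
        norm_num
      · rw [if_neg (by omega), if_neg (by omega), if_pos h.le,
          Nat.choose_eq_zero_of_lt (by omega)]
  | succ n ih =>
    intro k
    have e1 : 2*k - 2*(n+1:ℕ) = (2*(k-1) - 2*n : ℤ) := by push_cast; ring
    have e2 : 2*(k-1) - 2*n - 2 = (2*(k-2) - 2*n : ℤ) := by ring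
    have e3 : 2*(k-1) - 2*n + 2 = (2*k - 2*n : ℤ) := by ring
    have h1 : 2*(n+1)+3 = 2*n+5 := by ring
    have h2 : 2*(n+1)+4 = 2*n+6 := by ring
    rw [h1, h2, e1, g_rec, e2, e3, ih, ih, ih]
    have key : ∀ (N : ℕ) (j : ℤ), B (N+2) j = B N (j-2) + 2 * B N (j-1) + B N j := by
      intro N j
      rw [show N+2 = (N+1)+1 from rfl, B_pascal, B_pascal, B_pascal,
        show j - 1 - 1 = j - 2 by ring]
      ring
    rw [show 2*(n+1)+1 = (2*n+1)+2 by ring, key (2*n+1) k]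

theorem sCount_binomial (m k : ℕ) (hm : 1 ≤ m) (hk : k ≤ 2 * m - 1) :
    sCount (2 * m + 1) (2 * (k : ℤ) - 2 * m + 2) +
      sCount (2 * m + 2) (2 * (k : ℤ) - 2 * m + 2) = Nat.choose (2 * m - 1) k := by
  obtain ⟨n, rfl⟩ : ∃ n, m = n + 1 := ⟨m - 1, by omega⟩
  have e : 2 * (k:ℤ) - 2 * ((n+1:ℕ):ℤ) + 2 = 2*(k:ℤ) - 2*n := by push_cast; ring
  have h1 : 2 * (n+1) + 1 = 2*n+3 := by ring
  have h2 : 2 * (n+1) + 2 = 2*n+4 := by ring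
  rw [h1, h2, e, main_lemma n k]
  have : B (2*n+1) (k:ℤ) = Nat.choose (2*n+1) k := by
    unfold B
    rw [if_pos (by positivity), Int.toNat_natCast]
  rw [this, show 2*(n+1) - 1 = 2*n+1 by omega]
end

section
/- For every positive integer m, the sum Σ_{i=1}^{m} 2i·C(2m-1, m-1+i) + Σ_{i=1}^{m-1} 2i·C(2m-1, m-1-i) equals m·C(2m, m). -/
lemma tele_key (m : ℕ) (hm : 1 ≤ m) :
    ∑ j ∈ Finset.range m, (4 * j + 2) * Nat.choose (2 * m - 1) (m + j) =
      2 * m * Nat.choose (2 * m - 1) m := by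
  have hzero : Nat.choose (2 * m - 1) (m + m) = 0 :=
    Nat.choose_eq_zero_of_lt (by omega)
  have hz : (∑ j ∈ Finset.range m, ((4 * (j : ℤ) + 2) * (Nat.choose (2 * m - 1) (m + j) : ℤ)))
      = 2 * m * (Nat.choose (2 * m - 1) m : ℤ) := by
    have step : ∀ j ∈ Finset.range m,
        ((4 * (j : ℤ) + 2) * (Nat.choose (2 * m - 1) (m + j) : ℤ))
        = (fun j => (2 * ((m : ℤ) + j) * (Nat.choose (2 * m - 1) (m + j) : ℤ))) j
          - (fun j => (2 * ((m : ℤ) + j) * (Nat.choose (2 * m - 1) (m + j) : ℤ))) (j + 1) := by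
      intro j hj
      simp only [Finset.mem_range] at hj
      have hc := Nat.choose_succ_right_eq (2 * m - 1) (m + j)
      rw [show 2 * m - 1 - (m + j) = m - 1 - j from by omega] at hc
      have hc2 : ((Nat.choose (2 * m - 1) (m + j + 1) : ℤ)) * ((m : ℤ) + j + 1)
          = (Nat.choose (2 * m - 1) (m + j) : ℤ) * ((m - 1 - j : ℕ) : ℤ) := by
        exact_mod_cast hc
      have hc' : ((Nat.choose (2 * m - 1) (m + j + 1) : ℤ)) * ((m : ℤ) + j + 1)
          = (Nat.choose (2 * m - 1) (m + j) : ℤ) * ((m : ℤ) - 1 - j) := by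
        rw [hc2]; congr 1; omega
      simp only [show m + (j + 1) = m + j + 1 from rfl]
      push_cast
      linear_combination 2 * hc'
    rw [Finset.sum_congr rfl step, Finset.sum_range_sub']
    simp [hzero]
  exact_mod_cast hz

theorem total_signature_sum (m : ℕ) (hm : 1 ≤ m) :
    (∑ i ∈ Finset.Icc 1 m, 2 * i * Nat.choose (2 * m - 1) (m - 1 + i)) +
      (∑ i ∈ Finset.Icc 1 (m - 1), 2 * i * Nat.choose (2 * m - 1) (m - 1 - i)) =
      m * Nat.choose (2 * m) m := by
  have h1 : (∑ i ∈ Finset.Icc 1 m, 2 * i * Nat.choose (2 * m - 1) (m - 1 + i))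
      = ∑ j ∈ Finset.range m, 2 * (j + 1) * Nat.choose (2 * m - 1) (m + j) := by
    rw [← Finset.Ico_add_one_right_eq_Icc, Finset.sum_Ico_eq_sum_range]
    apply Finset.sum_congr (by congr 1)
    intro j _
    rw [show m - 1 + (1 + j) = m + j from by omega]
    ring
  have h2 : (∑ i ∈ Finset.Icc 1 (m - 1), 2 * i * Nat.choose (2 * m - 1) (m - 1 - i))
      = ∑ j ∈ Finset.range m, 2 * j * Nat.choose (2 * m - 1) (m + j) := by
    rw [← Finset.Ico_add_one_right_eq_Icc, Finset.sum_Ico_eq_sum_range]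
    have hs := Finset.sum_range_succ' (fun j => 2 * j * Nat.choose (2 * m - 1) (m + j)) (m - 1)
    rw [show m - 1 + 1 = m from by omega] at hs
    rw [hs]
    simp only [mul_zero, zero_mul, add_zero]
    apply Finset.sum_congr rfl
    intro j hj
    simp only [Finset.mem_range] at hj
    have hsym : Nat.choose (2 * m - 1) (m - 1 - (1 + j)) = Nat.choose (2 * m - 1) (m + (j + 1)) := by
      rw [show m - 1 - (1 + j) = (2 * m - 1) - (m + (j + 1)) from by omega]
      exact Nat.choose_symm (by omega)
    rw [hsym]
    ring
  rw [h1, h2, ← Finset.sum_add_distrib]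
  have h3 : ∑ j ∈ Finset.range m,
      (2 * (j + 1) * Nat.choose (2 * m - 1) (m + j) + 2 * j * Nat.choose (2 * m - 1) (m + j))
      = ∑ j ∈ Finset.range m, (4 * j + 2) * Nat.choose (2 * m - 1) (m + j) := by
    apply Finset.sum_congr rfl; intro j _; ring
  rw [h3, tele_key m hm]
  have hpascal : Nat.choose (2 * m) m
      = Nat.choose (2 * m - 1) (m - 1) + Nat.choose (2 * m - 1) m := by
    have h := Nat.choose_succ_succ (2 * m - 1) (m - 1)
    rw [Nat.succ_eq_add_one, Nat.succ_eq_add_one] at h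
    rw [show (2 * m - 1) + 1 = 2 * m from by omega, show (m - 1) + 1 = m from by omega] at h
    exact h
  have hsymm : Nat.choose (2 * m - 1) (m - 1) = Nat.choose (2 * m - 1) m := by
    have h := Nat.choose_symm_half (m - 1)
    rw [show 2 * (m - 1) + 1 = 2 * m - 1 from by omega,
      show (m - 1) + 1 = m from by omega] at h
    exact h.symm
  rw [hpascal, hsymm]
  ring
end

section
/- For every positive integer m, (4^m/√(πm))·(1 - 1/(4m)) < C(2m, m) < 4^m/√(πm). -/
/-!
The Wallis products `W n` satisfy `(2n+1)/(2n+2) · π/2 ≤ W n ≤ π/2` (comparison of the integrals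
of consecutive powers of `sin`), and `W n = 16^n / ((2n+1) C(2n,n)²)`. Both inequalities
translate into two-sided bounds for `π n C(2n,n)² / 16^n`, which are already sharp enough to give
the claim after squaring it.
-/

open Real

namespace Nat

theorem centralBinom_mul_factorial_sq (n : ℕ) : n.centralBinom * n ! ^ 2 = (2 * n)! := by
  rw [centralBinom_eq_two_mul_choose, two_mul, sq, ← mul_assoc,
    add_choose_mul_factorial_mul_factorial]

end Nat

namespace Real.Wallis

theorem W_eq_four_pow_sq_div_centralBinom_sq (n : ℕ) :
    W n = (4 ^ n) ^ 2 / ((2 * n + 1) * n.centralBinom ^ 2) := by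
  have hfac : (n.factorial : ℝ) ≠ 0 := by positivity
  have h16 : (2 : ℝ) ^ (4 * n) = (4 ^ n) ^ 2 := by
    rw [show (4 : ℝ) = 2 ^ 2 by norm_num, ← pow_mul, ← pow_mul]
    ring_nf
  rw [W_eq_factorial_ratio, ← Nat.centralBinom_mul_factorial_sq, h16]
  push_cast
  field_simp

end Real.Wallis

namespace Nat

theorem two_mul_four_pow_sq_le_pi_mul_centralBinom_sq (n : ℕ) :
    2 * (4 ^ n) ^ 2 ≤ π * (2 * n + 1) * (n.centralBinom : ℝ) ^ 2 := by
  have h := Wallis.W_le n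
  have : (0 : ℝ) < (2 * n + 1) * n.centralBinom ^ 2 := by
    have := n.centralBinom_pos; positivity
  rw [Wallis.W_eq_four_pow_sq_div_centralBinom_sq, div_le_iff₀ this] at h
  linarith

theorem pi_mul_centralBinom_sq_le (n : ℕ) :
    π * (2 * n + 1) ^ 2 * (n.centralBinom : ℝ) ^ 2 ≤ 4 * (n + 1) * (4 ^ n) ^ 2 := by
  have h := Wallis.le_W n
  have : (0 : ℝ) < (2 * n + 1) * n.centralBinom ^ 2 := by
    have := n.centralBinom_pos; positivity
  rw [Wallis.W_eq_four_pow_sq_div_centralBinom_sq, le_div_iff₀ this, div_mul_eq_mul_div, div_mul_eq_mul_div,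
    div_le_iff₀ (by positivity)] at h
  nlinarith

theorem pi_mul_centralBinom_sq_lt (n : ℕ) :
    π * n * (n.centralBinom : ℝ) ^ 2 < (4 ^ n) ^ 2 := by
  have h := pi_mul_centralBinom_sq_le n
  have : (0 : ℝ) < (4 ^ n) ^ 2 := by positivity
  have : (0 : ℝ) < (2 * n + 1) ^ 2 := by positivity
  nlinarith

theorem four_pow_mul_sq_lt_pi_mul_centralBinom_sq {n : ℕ} (hn : 0 < n) :
    (4 ^ n * (1 - 1 / (4 * n))) ^ 2 < π * n * (n.centralBinom : ℝ) ^ 2 := by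
  have h := two_mul_four_pow_sq_le_pi_mul_centralBinom_sq n
  have hn' : (1 : ℝ) ≤ n := by exact_mod_cast hn
  have key : ((4 : ℝ) * n - 1) ^ 2 * (2 * n + 1) < 32 * n ^ 3 := by nlinarith
  rw [one_sub_div (by positivity), mul_div_assoc', div_pow, div_lt_iff₀ (by positivity)]
  have hx : (0 : ℝ) < (4 ^ n) ^ 2 := by positivity
  refine lt_of_mul_lt_mul_right ?_ (by positivity : (0 : ℝ) ≤ 2 * n + 1)
  calc (4 ^ n * (4 * n - 1)) ^ 2 * (2 * n + 1) < ((4 : ℝ) ^ n) ^ 2 * (32 * n ^ 3) := by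
        nlinarith [mul_lt_mul_of_pos_left key hx]
    _ ≤ π * n * n.centralBinom ^ 2 * (4 * n) ^ 2 * (2 * n + 1) := by
        nlinarith [mul_le_mul_of_nonneg_right h (by positivity : (0 : ℝ) ≤ 16 * n ^ 3)]

end Nat

theorem lt_div_sqrt_iff {a b c : ℝ} (ha : 0 ≤ a) (hb : 0 ≤ b) (hc : 0 < c) :
    a < b / √c ↔ a ^ 2 * c < b ^ 2 := by
  rw [lt_div_iff₀ (sqrt_pos.2 hc), ← pow_lt_pow_iff_left₀ (by positivity) hb two_ne_zero,
    mul_pow, sq_sqrt hc.le]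

theorem div_sqrt_lt_iff {a b c : ℝ} (ha : 0 ≤ a) (hb : 0 ≤ b) (hc : 0 < c) :
    b / √c < a ↔ b ^ 2 < a ^ 2 * c := by
  rw [div_lt_iff₀ (sqrt_pos.2 hc), ← pow_lt_pow_iff_left₀ hb (by positivity) two_ne_zero,
    mul_pow, sq_sqrt hc.le]

theorem central_binom_bounds (m : ℕ) (hm : 1 ≤ m) :
    (4 ^ m / Real.sqrt (Real.pi * m)) * (1 - 1 / (4 * m)) <
        (Nat.choose (2 * m) m : ℝ) ∧
      (Nat.choose (2 * m) m : ℝ) < 4 ^ m / Real.sqrt (Real.pi * m) := by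
  have hπm : 0 < π * m := by positivity
  have hfactor : (0 : ℝ) ≤ 1 - 1 / (4 * m) := by
    rw [sub_nonneg, div_le_one (by positivity)]
    exact_mod_cast (by omega : 1 ≤ 4 * m)
  rw [← Nat.centralBinom_eq_two_mul_choose, div_mul_eq_mul_div,
    div_sqrt_lt_iff (Nat.cast_nonneg _) (by positivity) hπm,
    lt_div_sqrt_iff (Nat.cast_nonneg _) (by positivity) hπm, mul_comm _ (π * m)]
  exact ⟨Nat.four_pow_mul_sq_lt_pi_mul_centralBinom_sq hm, Nat.pi_mul_centralBinom_sq_lt m⟩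
end

section
/- Let P = (1/2^s)·M^s where M is the 3×3 matrix with rows (1,1,0),(1,0,1),(0,1,1) and s ≥ 1. Then for every k ≥ 0 and all indices i, j, ℓ ∈ {1,2,3}, |(P^k)(i,j) - (P^k)(i,ℓ)| ≤ 2^(-ks). -/
private lemma key_row_bound (n : ℕ) :
    ∀ i j l : Fin 3,
      |((!![1, 1, 0; 1, 0, 1; 0, 1, 1] : Matrix (Fin 3) (Fin 3) ℝ) ^ n) i j -
        ((!![1, 1, 0; 1, 0, 1; 0, 1, 1] : Matrix (Fin 3) (Fin 3) ℝ) ^ n) i l| ≤ 1 := by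
  induction n with
  | zero =>
    intro i j l
    fin_cases i <;> fin_cases j <;> fin_cases l <;>
      simp [Matrix.one_apply] <;> norm_num
  | succ n ih =>
    intro i j l
    obtain ⟨a01, b01⟩ := abs_le.mp (ih i 0 1)
    obtain ⟨a02, b02⟩ := abs_le.mp (ih i 0 2)
    obtain ⟨a12, b12⟩ := abs_le.mp (ih i 1 2)
    rw [pow_succ]
    fin_cases j <;> fin_cases l <;>
      simp [Matrix.mul_apply, Fin.sum_univ_three, Matrix.vecHead, Matrix.vecTail] <;>
      rw [abs_le] <;> constructor <;> linarith

theorem transition_matrix_row_bound (s : ℕ) (hs : 1 ≤ s) (k : ℕ)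
    (P : Matrix (Fin 3) (Fin 3) ℝ)
    (hP : P = ((1 : ℝ) / 2 ^ s) •
      (!![1, 1, 0; 1, 0, 1; 0, 1, 1] : Matrix (Fin 3) (Fin 3) ℝ) ^ s) :
    ∀ i j l : Fin 3, |(P ^ k) i j - (P ^ k) i l| ≤ (1 / 2 ^ s) ^ k := by
  intro i j l
  subst hP
  rw [smul_pow, ← pow_mul]
  simp only [Matrix.smul_apply, smul_eq_mul]
  rw [← mul_sub, abs_mul]
  have hc : (0:ℝ) ≤ (1 / 2 ^ s) ^ k := by positivity
  calc |((1:ℝ) / 2 ^ s) ^ k| *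
        |((!![1, 1, 0; 1, 0, 1; 0, 1, 1] : Matrix (Fin 3) (Fin 3) ℝ) ^ (s * k)) i j -
          ((!![1, 1, 0; 1, 0, 1; 0, 1, 1] : Matrix (Fin 3) (Fin 3) ℝ) ^ (s * k)) i l|
      ≤ |((1:ℝ) / 2 ^ s) ^ k| * 1 := by
        gcongr
        exact key_row_bound (s * k) i j l
    _ = (1 / 2 ^ s) ^ k := by rw [mul_one, abs_of_nonneg hc]
end

section
/- For all integers c > 10^4, with s = ⌈log₁₀ c⌉ and any integers t ≥ 1 and 2 ≤ r ≤ s+2 satisfying c = s·t + r, the quantity (t+1) + (3/2)t + (3/2)(s+3)√(2^s·t) + (1/2)(s+3)·2^(s/2) + (1/2)(r-1) is at most 4.94·c/log₁₀ c. -/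
theorem lemA' (s : ℕ) (h : 5 ≤ s) : 225*(s+3)^2*2^s*s ≤ 256*10^(s-1) := by
  induction s, h using Nat.le_induction with
  | base => norm_num
  | succ n hn ih =>
    have h1 : n - 1 + 1 = n := Nat.sub_add_cancel (by omega)
    have e1 : 10 ^ (n+1-1) = 10 * 10 ^ (n-1) := by
      rw [Nat.add_sub_cancel]; conv_lhs => rw [← h1]
      rw [pow_succ, mul_comm]
    have e2 : 2 ^ (n+1) = 2 * 2 ^ n := by rw [pow_succ, mul_comm]
    have hpoly : 2*(n+1+3)^2*(n+1) ≤ 10*((n+3)^2*n) := by nlinarith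
    calc 225*(n+1+3)^2*2^(n+1)*(n+1) = (2*(n+1+3)^2*(n+1))*(225*2^n) := by rw [e2]; ring
      _ ≤ (10*((n+3)^2*n))*(225*2^n) := Nat.mul_le_mul_right _ hpoly
      _ = 10*(225*(n+3)^2*2^n*n) := by ring
      _ ≤ 10*(256*10^(n-1)) := Nat.mul_le_mul_left _ ih
      _ = 256*10^(n+1-1) := by rw [e1]; ring

theorem lemB' (s : ℕ) (h : 5 ≤ s) : 25*s^2*(s+3)^2*2^s ≤ 100^(s-1) := by
  induction s, h using Nat.le_induction with
  | base => norm_num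
  | succ n hn ih =>
    have h1 : n - 1 + 1 = n := Nat.sub_add_cancel (by omega)
    have e1 : 100 ^ (n+1-1) = 100 * 100 ^ (n-1) := by
      rw [Nat.add_sub_cancel]; conv_lhs => rw [← h1]
      rw [pow_succ, mul_comm]
    have e2 : 2 ^ (n+1) = 2 * 2 ^ n := by rw [pow_succ, mul_comm]
    have hpoly : 2*(n+1)^2*(n+1+3)^2 ≤ 100*(n^2*(n+3)^2) := by nlinarith
    calc 25*(n+1)^2*(n+1+3)^2*2^(n+1) = (2*(n+1)^2*(n+1+3)^2)*(25*2^n) := by rw [e2]; ring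
      _ ≤ (100*(n^2*(n+3)^2))*(25*2^n) := Nat.mul_le_mul_right _ hpoly
      _ = 100*(25*n^2*(n+3)^2*2^n) := by ring
      _ ≤ 100*100^(n-1) := Nat.mul_le_mul_left _ ih
      _ = 100^(n+1-1) := by rw [e1]

theorem lemC' (s : ℕ) (h : 5 ≤ s) : 5*s*(s+3) ≤ 10^(s-1) := by
  induction s, h using Nat.le_induction with
  | base => norm_num
  | succ n hn ih =>
    have h1 : n - 1 + 1 = n := Nat.sub_add_cancel (by omega)
    have e1 : 10 ^ (n+1-1) = 10 * 10 ^ (n-1) := by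
      rw [Nat.add_sub_cancel]; conv_lhs => rw [← h1]
      rw [pow_succ, mul_comm]
    rw [e1]
    nlinarith [ih]

set_option maxHeartbeats 2000000 in
theorem analysis_bound (c s t r : ℕ) (hc : 10 ^ 4 < c)
    (hs : (s : ℤ) = ⌈Real.logb 10 (c : ℝ)⌉)
    (ht : 1 ≤ t) (hr1 : 2 ≤ r) (hr2 : r ≤ s + 2) (hc2 : c = s * t + r) :
    ((t : ℝ) + 1) + (3 / 2) * t + (3 / 2) * ((s : ℝ) + 3) * Real.sqrt (2 ^ s * t) +
        (1 / 2) * ((s : ℝ) + 3) * (2 : ℝ) ^ ((s : ℝ) / 2) + (1 / 2) * ((r : ℝ) - 1) ≤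
      4.94 * c / Real.logb 10 (c : ℝ) := by
  have hc0 : (0:ℝ) < c := by positivity
  have hlog4 : (4:ℝ) < Real.logb 10 (c:ℝ) := by
    have h1 : Real.logb 10 ((10:ℝ)^(4:ℕ)) = 4 := by
      rw [Real.logb_pow]; simp [Real.logb_self_eq_one]
    rw [← h1]
    apply Real.logb_lt_logb (by norm_num) (by norm_num)
    exact_mod_cast hc
  have hs5 : 5 ≤ s := by
    have h2 : (4:ℤ) < ⌈Real.logb 10 (c:ℝ)⌉ := by
      rw [Int.lt_ceil]; exact_mod_cast hlog4
    rw [← hs] at h2; exact_mod_cast h2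
  have hlog_le : Real.logb 10 (c:ℝ) ≤ s := by
    have := Int.le_ceil (Real.logb 10 (c:ℝ))
    rw [← hs] at this; exact_mod_cast this
  have hlog_gt : (s:ℝ) - 1 < Real.logb 10 (c:ℝ) := by
    have h2 := Int.ceil_lt_add_one (Real.logb 10 (c:ℝ))
    rw [← hs] at h2
    have : (s:ℝ) < Real.logb 10 (c:ℝ) + 1 := by exact_mod_cast h2
    linarith
  have hclow : ((10:ℝ)^(s-1 : ℕ)) < (c:ℝ) := by
    have h3 : (10:ℝ) ^ ((s:ℝ) - 1) < (10:ℝ) ^ Real.logb 10 (c:ℝ) := by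
      apply Real.rpow_lt_rpow_left_iff (by norm_num : (1:ℝ) < 10) |>.mpr hlog_gt
    rw [Real.rpow_logb (by norm_num) (by norm_num) hc0] at h3
    have h4 : ((s:ℝ) - 1) = ((s - 1 : ℕ) : ℝ) := by
      have : 1 ≤ s := by omega
      push_cast [this]; ring
    rw [h4, Real.rpow_natCast] at h3
    exact h3
  have hS5 : (5:ℝ) ≤ (s:ℝ) := by exact_mod_cast hs5
  have hS0 : (0:ℝ) < (s:ℝ) := by linarith
  have hR2 : (2:ℝ) ≤ (r:ℝ) := by exact_mod_cast hr1
  have hRS : (r:ℝ) ≤ (s:ℝ) + 2 := by exact_mod_cast hr2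
  have hST : (s:ℝ) * (t:ℝ) + (r:ℝ) = (c:ℝ) := by exact_mod_cast hc2.symm
  have hT0 : (0:ℝ) ≤ (t:ℝ) := by positivity
  -- cast the nat lemmas
  have hA : (225:ℝ)*((s:ℝ)+3)^2*2^s*(s:ℝ) ≤ 256*(10:ℝ)^(s-1:ℕ) := by
    have := lemA' s hs5
    exact_mod_cast this
  have hB : (25:ℝ)*(s:ℝ)^2*((s:ℝ)+3)^2*2^s ≤ (100:ℝ)^(s-1:ℕ) := by
    have := lemB' s hs5
    exact_mod_cast this
  have hC : (5:ℝ)*(s:ℝ)*((s:ℝ)+3) ≤ (10:ℝ)^(s-1:ℕ) := by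
    have := lemC' s hs5
    exact_mod_cast this
  have h2s0 : (0:ℝ) < (2:ℝ)^s := by positivity
  -- term 1 bound
  have hT1 : (3/2) * ((s:ℝ)+3) * Real.sqrt (2^s * t) * (s:ℝ) ≤ 1.6 * c := by
    have hX0 : (0:ℝ) ≤ (2:ℝ)^s * t := by positivity
    have hlhs0 : (0:ℝ) ≤ (3/2) * ((s:ℝ)+3) * Real.sqrt (2^s * t) * (s:ℝ) := by positivity
    have hrhs0 : (0:ℝ) ≤ 1.6 * (c:ℝ) := by positivity
    have key : ((3/2) * ((s:ℝ)+3) * Real.sqrt (2^s * t) * (s:ℝ))^2 ≤ (1.6 * c)^2 := by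
      have hsq : (Real.sqrt (2^s * t))^2 = (2:ℝ)^s * t := Real.sq_sqrt hX0
      have e : ((3/2) * ((s:ℝ)+3) * Real.sqrt (2^s * t) * (s:ℝ))^2
          = ((9/4) * ((s:ℝ)+3)^2 * 2^s * (s:ℝ)) * ((s:ℝ) * t) := by
        rw [mul_pow, mul_pow, mul_pow, hsq]; ring
      rw [e]
      have h6 : (9/4) * ((s:ℝ)+3)^2 * 2^s * (s:ℝ) ≤ 2.56 * c := by
        linarith [hA, hclow]
      have h7 : (s:ℝ) * t ≤ (c:ℝ) := by linarith
      nlinarith [mul_le_mul h6 h7 (by positivity) (by positivity)]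
    calc (3/2) * ((s:ℝ)+3) * Real.sqrt (2^s * t) * (s:ℝ)
        = Real.sqrt (((3/2) * ((s:ℝ)+3) * Real.sqrt (2^s * t) * (s:ℝ))^2) := (Real.sqrt_sq hlhs0).symm
      _ ≤ Real.sqrt ((1.6 * c)^2) := Real.sqrt_le_sqrt key
      _ = 1.6 * c := Real.sqrt_sq hrhs0
  -- rewrite rpow
  have hpow : (2:ℝ) ^ ((s:ℝ) / 2) = Real.sqrt ((2:ℝ)^(s:ℕ)) := by
    rw [Real.sqrt_eq_rpow, ← Real.rpow_natCast 2 s, ← Real.rpow_mul (by norm_num : (0:ℝ) ≤ 2)]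
    congr 1; ring
  -- term 2 bound
  have hT2 : (1/2) * ((s:ℝ)+3) * Real.sqrt ((2:ℝ)^(s:ℕ)) * (s:ℝ) ≤ 0.1 * c := by
    have hX0 : (0:ℝ) ≤ (2:ℝ)^(s:ℕ) := by positivity
    have hlhs0 : (0:ℝ) ≤ (1/2) * ((s:ℝ)+3) * Real.sqrt ((2:ℝ)^(s:ℕ)) * (s:ℝ) := by positivity
    have hrhs0 : (0:ℝ) ≤ 0.1 * (c:ℝ) := by positivity
    have key : ((1/2) * ((s:ℝ)+3) * Real.sqrt ((2:ℝ)^(s:ℕ)) * (s:ℝ))^2 ≤ (0.1 * c)^2 := by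
      have hsq : (Real.sqrt ((2:ℝ)^(s:ℕ)))^2 = (2:ℝ)^(s:ℕ) := Real.sq_sqrt hX0
      have e : ((1/2) * ((s:ℝ)+3) * Real.sqrt ((2:ℝ)^(s:ℕ)) * (s:ℝ))^2
          = (1/4) * (s:ℝ)^2 * ((s:ℝ)+3)^2 * 2^s := by
        rw [mul_pow, mul_pow, mul_pow, hsq]; ring
      rw [e]
      have h100 : ((100:ℝ))^(s-1:ℕ) = ((10:ℝ)^(s-1:ℕ))^2 := by
        rw [← pow_mul, mul_comm, pow_mul]; norm_num
      have hDpos : (0:ℝ) < (10:ℝ)^(s-1:ℕ) := by positivity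
      have hD2 : ((10:ℝ)^(s-1:ℕ))^2 ≤ (c:ℝ)^2 := by nlinarith [hclow, hDpos]
      rw [h100] at hB
      nlinarith [hB, hD2]
    calc (1/2) * ((s:ℝ)+3) * Real.sqrt ((2:ℝ)^(s:ℕ)) * (s:ℝ)
        = Real.sqrt (((1/2) * ((s:ℝ)+3) * Real.sqrt ((2:ℝ)^(s:ℕ)) * (s:ℝ))^2) := (Real.sqrt_sq hlhs0).symm
      _ ≤ Real.sqrt ((0.1 * c)^2) := Real.sqrt_le_sqrt key
      _ = 0.1 * c := Real.sqrt_sq hrhs0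
  have hT3 : (s:ℝ)*((s:ℝ)+3)/2 ≤ 0.1 * c := by
    nlinarith [hC, hclow]
  rw [hpow]
  have step2 : 4.94 * (c:ℝ) / (s:ℝ) ≤ 4.94 * c / Real.logb 10 (c:ℝ) :=
    div_le_div_of_nonneg_left (by positivity) (by linarith) hlog_le
  have step1 : ((t : ℝ) + 1) + (3 / 2) * t + (3 / 2) * ((s : ℝ) + 3) * Real.sqrt (2 ^ s * t) +
        (1 / 2) * ((s : ℝ) + 3) * Real.sqrt ((2:ℝ)^(s:ℕ)) + (1 / 2) * ((r : ℝ) - 1)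
        ≤ 4.94 * (c:ℝ) / (s:ℝ) := by
    rw [le_div_iff₀ hS0]
    nlinarith [hT1, hT2, hT3, hST, hR2, hRS, hS5, hc0,
      mul_nonneg (by linarith : (0:ℝ) ≤ (s:ℝ) + 2 - r) (le_of_lt hS0)]
  linarith
end
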